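/- arXiv:math/0310307 — 3 statements merged into one kernel-verified Lean document; each statement's English description precedes it below -/
import Mathlib

section
/- Let n ≥ 2 and ζ ≥ 0. Let c : Fin n × Fin n → ℝ satisfy c(j,k) ≥ 0, c(k,k) = 0 for all k, and c(j,k) ≤ ζ for all j,k. Let a : Fin n → ℝ with a(k) ≥ 0. Then ∑_{j,k,l} c(j,k) c(j,l) a(k) a(l) ≤ (n-1)^2 ζ^2 ∑_k a(k)^2. -/
theorem lemma22_combinatorial_core (n : ℕ) (hn : 2 ≤ n) (ζ : ℝ) (hζ : 0 ≤ ζ)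
    (c : Fin n × Fin n → ℝ) (hc0 : ∀ j k, 0 ≤ c (j, k))
    (hcd : ∀ k, c (k, k) = 0) (hcζ : ∀ j k, c (j, k) ≤ ζ)
    (a : Fin n → ℝ) (ha : ∀ k, 0 ≤ a k) :
    ∑ j, ∑ k, ∑ l, c (j, k) * c (j, l) * a k * a l ≤
      ((n : ℝ) - 1) ^ 2 * ζ ^ 2 * ∑ k, (a k) ^ 2 := by
  have key : ∀ j : Fin n, ∑ k, ∑ l, c (j, k) * c (j, l) * a k * a l
      = (∑ k, c (j, k) * a k) ^ 2 := by
    intro j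
    rw [sq, Finset.sum_mul_sum]
    apply Finset.sum_congr rfl; intro k _
    apply Finset.sum_congr rfl; intro l _
    ring
  simp_rw [key]
  have step1 : ∀ j : Fin n, (∑ k, c (j, k) * a k) ^ 2 ≤
      ((n : ℝ) - 1) * ζ ^ 2 * ∑ k ∈ Finset.univ.erase j, (a k) ^ 2 := by
    intro j
    have h1 : ∑ k, c (j, k) * a k = ∑ k ∈ Finset.univ.erase j, c (j, k) * a k := by
      rw [Finset.sum_erase]
      simp [hcd j]
    have h2 : ∑ k ∈ Finset.univ.erase j, c (j, k) * a k ≤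
        ζ * ∑ k ∈ Finset.univ.erase j, a k := by
      rw [Finset.mul_sum]
      exact Finset.sum_le_sum fun k _ => mul_le_mul_of_nonneg_right (hcζ j k) (ha k)
    have h3 : (∑ k, c (j, k) * a k) ^ 2 ≤ (ζ * ∑ k ∈ Finset.univ.erase j, a k) ^ 2 := by
      apply pow_le_pow_left₀ _ (h1 ▸ h2)
      exact Finset.sum_nonneg fun k _ => mul_nonneg (hc0 j k) (ha k)
    refine h3.trans ?_
    rw [mul_pow]
    have h4 : (∑ k ∈ Finset.univ.erase j, a k) ^ 2 ≤
        ((n : ℝ) - 1) * ∑ k ∈ Finset.univ.erase j, (a k) ^ 2 := by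
      have := sq_sum_le_card_mul_sum_sq (s := Finset.univ.erase j) (f := a)
      rwa [Finset.card_erase_of_mem (Finset.mem_univ j), Finset.card_univ,
        Fintype.card_fin, Nat.cast_sub (by omega : 1 ≤ n), Nat.cast_one] at this
    calc ζ ^ 2 * (∑ k ∈ Finset.univ.erase j, a k) ^ 2
        ≤ ζ ^ 2 * (((n : ℝ) - 1) * ∑ k ∈ Finset.univ.erase j, (a k) ^ 2) :=
          mul_le_mul_of_nonneg_left h4 (by positivity)
      _ = ((n : ℝ) - 1) * ζ ^ 2 * ∑ k ∈ Finset.univ.erase j, (a k) ^ 2 := by ring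
  calc ∑ j, (∑ k, c (j, k) * a k) ^ 2
      ≤ ∑ j, ((n : ℝ) - 1) * ζ ^ 2 * ∑ k ∈ Finset.univ.erase j, (a k) ^ 2 :=
        Finset.sum_le_sum fun j _ => step1 j
    _ = ((n : ℝ) - 1) * ζ ^ 2 * ∑ j, ∑ k ∈ Finset.univ.erase j, (a k) ^ 2 := by
        rw [Finset.mul_sum]
    _ = ((n : ℝ) - 1) * ζ ^ 2 * (((n : ℝ) - 1) * ∑ k, (a k) ^ 2) := by
        congr 1
        have : ∀ j : Fin n, ∑ k ∈ Finset.univ.erase j, (a k) ^ 2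
            = (∑ k, (a k) ^ 2) - (a j) ^ 2 := fun j =>
          Finset.sum_erase_eq_sub (Finset.mem_univ j)
        simp_rw [this, Finset.sum_sub_distrib, Finset.sum_const, Finset.card_univ,
          Fintype.card_fin, nsmul_eq_mul]
        ring
    _ = ((n : ℝ) - 1) ^ 2 * ζ ^ 2 * ∑ k, (a k) ^ 2 := by ring
end

section
/- Let n ≥ 2, μ > 0, ν₀ ≥ 0, S₀ ∈ ℝ. Then sup over t ≥ 0 of the function f(t) = S₀ + (4ν₀ t − (n−1)μ² S₀ t²)/(1 + n(n−1)μ² t²) equals (1/(2n))·((2n−1) S₀ + √(S₀² + (n/(n−1))·(4ν₀/μ)²)). -/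
/-!
Put `a = (n - 1) μ²`, `c = 4 ν₀` and let `D` be the square root, so that `a (D² - S₀²) = n c²`.
Clearing the denominator, `g t ≤ (D - S₀) / (2n)` for the fraction `g` becomes the nonnegativity of
`n a (D + S₀) t² - 2 n c t + (D - S₀)`, a quadratic with vanishing discriminant. Its double root
`t = c / (a (D + S₀))` is nonnegative and attains the bound. If `D + S₀ = 0` there is no double
root, but then the bound `-S₀ / n` is the limit of `g` at infinity.
-/

open Filter Topology

section OrderedField

variable {K : Type*} [Field K] [LinearOrder K] [IsStrictOrderedRing K]

lemma quadratic_nonneg_of_sq_eq_mul {A B C : K} (hA : 0 ≤ A) (hC : 0 ≤ C) (hB : B ^ 2 = A * C)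
    (t : K) : 0 ≤ A * t ^ 2 - 2 * B * t + C := by
  rcases hA.eq_or_lt with rfl | hA
  · obtain rfl : B = 0 := by simpa using hB
    simpa using hC
  · refine nonneg_of_mul_nonneg_right ?_ hA
    calc 0 ≤ (A * t - B) ^ 2 := sq_nonneg _
      _ = A * (A * t ^ 2 - 2 * B * t + C) := by linear_combination hB

variable {N a c S D : K}

lemma abs_le_of_sq_mul_eq (hN : 0 ≤ N) (ha : 0 < a) (hD : 0 ≤ D)
    (hDa : D ^ 2 * a = S ^ 2 * a + N * c ^ 2) : |S| ≤ D := by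
  refine abs_le_of_sq_le_sq (le_of_mul_le_mul_right ?_ ha) hD
  nlinarith [mul_nonneg hN (sq_nonneg c)]

lemma div_le_of_sq_mul_eq (hN : 0 < N) (ha : 0 < a) (hD : 0 ≤ D)
    (hDa : D ^ 2 * a = S ^ 2 * a + N * c ^ 2) (t : K) :
    (c * t - a * S * t ^ 2) / (1 + N * a * t ^ 2) ≤ (D - S) / (2 * N) := by
  obtain ⟨hSD, hDS⟩ := abs_le.mp (abs_le_of_sq_mul_eq hN.le ha hD hDa)
  rw [div_le_div_iff₀ (by positivity) (by positivity), ← sub_nonneg]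
  have hQ := quadratic_nonneg_of_sq_eq_mul (A := N * a * (D + S)) (B := N * c) (C := D - S)
    (mul_nonneg (mul_pos hN ha).le (by linarith)) (by linarith) (by linear_combination -N * hDa) t
  linear_combination hQ

lemma div_eq_of_double_root {u : K} (hN : 0 < N) (ha : 0 < a) (hDS : 0 < D + S)
    (hDa : D ^ 2 * a = S ^ 2 * a + N * c ^ 2) (hu : a * (D + S) * u = c) :
    (c * u - a * S * u ^ 2) / (1 + N * a * u ^ 2) = (D - S) / (2 * N) := by
  have hroot : D - S = N * a * (D + S) * u ^ 2 := by
    refine mul_left_cancel₀ (mul_pos ha hDS).ne' ?_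
    linear_combination hDa - N * (c + a * (D + S) * u) * hu
  rw [div_eq_div_iff (by positivity) (by positivity)]
  linear_combination (-2 * N * u) * hu - hroot

end OrderedField

lemma tendsto_div_atTop (N a c S : ℝ) (hNa : N * a ≠ 0) :
    Tendsto (fun t ↦ (c * t - a * S * t ^ 2) / (1 + N * a * t ^ 2)) atTop (𝓝 (-S / N)) := by
  have hlim : Tendsto (fun t : ℝ ↦ (c * t⁻¹ - a * S) / (t⁻¹ ^ 2 + N * a)) atTop
      (𝓝 ((c * 0 - a * S) / (0 ^ 2 + N * a))) :=
    ((tendsto_inv_atTop_zero.const_mul c).sub_const _).div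
      ((tendsto_inv_atTop_zero.pow 2).add_const _) (by simpa using hNa)
  rw [show (c * 0 - a * S) / (0 ^ 2 + N * a) = -S / N by
    field_simp [left_ne_zero_of_mul hNa, right_ne_zero_of_mul hNa]; ring] at hlim
  refine hlim.congr' ((eventually_gt_atTop 0).mono fun t ht ↦ ?_)
  field_simp

lemma isLUB_add_div (N a c S D : ℝ) (hN : 0 < N) (ha : 0 < a) (hc : 0 ≤ c) (hD : 0 ≤ D)
    (hDa : D ^ 2 * a = S ^ 2 * a + N * c ^ 2) :
    IsLUB {y | ∃ t ≥ (0 : ℝ), y = S + (c * t - a * S * t ^ 2) / (1 + N * a * t ^ 2)}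
      (S + (D - S) / (2 * N)) := by
  refine isLUB_of_mem_closure ?_ ?_
  · rintro y ⟨t, -, rfl⟩
    exact add_le_add_right (div_le_of_sq_mul_eq hN ha hD hDa t) S
  rcases (neg_le_iff_add_nonneg'.mp (abs_le.mp (abs_le_of_sq_mul_eq hN.le ha hD hDa)).1).eq_or_lt
    with hDS | hDS
  · have hlim := (tendsto_div_atTop N a c S (mul_pos hN ha).ne').const_add S
    rw [show -S / N = (D - S) / (2 * N) by field_simp; linear_combination hDS] at hlim
    exact mem_closure_of_tendsto hlim
      ((eventually_ge_atTop 0).mono fun t ht ↦ ⟨t, ht, rfl⟩)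
  · have hu : a * (D + S) * (c / (a * (D + S))) = c := mul_div_cancel₀ c (mul_pos ha hDS).ne'
    exact subset_closure ⟨_, div_nonneg hc (mul_pos ha hDS).le,
      by rw [div_eq_of_double_root hN ha hDS hDa hu]⟩

theorem sup_weyl_estimate (n : ℕ) (hn : 2 ≤ n) (μ ν₀ S₀ : ℝ) (hμ : 0 < μ)
    (hν₀ : 0 ≤ ν₀) :
    sSup {y : ℝ | ∃ t ≥ (0 : ℝ),
        y = S₀ + (4 * ν₀ * t - ((n : ℝ) - 1) * μ ^ 2 * S₀ * t ^ 2) /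
              (1 + (n : ℝ) * ((n : ℝ) - 1) * μ ^ 2 * t ^ 2)} =
      (1 / (2 * (n : ℝ))) * ((2 * (n : ℝ) - 1) * S₀ +
        Real.sqrt (S₀ ^ 2 + ((n : ℝ) / ((n : ℝ) - 1)) * (4 * ν₀ / μ) ^ 2)) := by
  have hn1 : (0 : ℝ) < n - 1 := by
    have : (2 : ℝ) ≤ n := by exact_mod_cast hn
    linarith
  set D := Real.sqrt (S₀ ^ 2 + ((n : ℝ) / ((n : ℝ) - 1)) * (4 * ν₀ / μ) ^ 2)
  have hDa : D ^ 2 * ((n - 1) * μ ^ 2) = S₀ ^ 2 * ((n - 1) * μ ^ 2) + n * (4 * ν₀) ^ 2 := by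
    rw [Real.sq_sqrt (by positivity)]
    field_simp
  have hlub := isLUB_add_div n ((n - 1) * μ ^ 2) (4 * ν₀) S₀ D (by linarith) (by positivity)
    (by positivity) (Real.sqrt_nonneg _) hDa
  simp only [← mul_assoc] at hlub
  rw [hlub.csSup_eq ⟨S₀, 0, le_rfl, by simp⟩]
  field_simp
  ring
end

section
/- Let n ≥ 2, μ > 0, ν₀ ≥ 0, η ≥ 0, S₀ ∈ ℝ. Then sup over t ≥ 0 of f(t) = S₀ + (4ν₀ t − 2((n−1)μ² S₀ + 4η)t²)/(1 + 2n(n−1)μ² t²) equals (1/(2n))·((2n−1)S₀ − 4η/((n−1)μ²) + √((S₀ + 4η/((n−1)μ²))² + (8n/(n−1))(ν₀/μ)²)). -/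
/-!
For `g t = (b t - p t²) / (1 + d t²)` with `d > 0`, `g ≤ c` everywhere exactly when the quadratic
`c + (c d + p) t² - b t` is nonnegative, i.e. when `b² ≤ 4 c (c d + p)`. The least admissible `c`
is the nonnegative root `(√(p² + d b²) - p) / (2d)` of the equality case; it is attained at the
vertex `t = b / (2 (c d + p))`, or approached as `t → ∞` when `c d + p = 0`. With `b = 4ν₀`,
`p = 2((n-1)μ² S₀ + 4η)` and `d = 2n(n-1)μ²` this root is the stated value minus `S₀`.
-/

open Filter Topology

namespace RationalQuadratic

variable {s b c d k p : ℝ}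

theorem quadratic_nonneg_of_sq_le (hc : 0 ≤ c) (hk : 0 ≤ k) (hb : b ^ 2 ≤ 4 * c * k) (t : ℝ) :
    0 ≤ c + k * t ^ 2 - b * t := by
  rcases hc.eq_or_lt with rfl | hc
  · have hb0 : b = 0 := by nlinarith
    subst hb0
    nlinarith [sq_nonneg t]
  · nlinarith [sq_nonneg (2 * c - b * t), sq_nonneg t]

theorem div_le_of_sq_le (hd : 0 ≤ d) (hc : 0 ≤ c) (hk : 0 ≤ c * d + p)
    (hb : b ^ 2 ≤ 4 * c * (c * d + p)) (t : ℝ) :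
    (b * t - p * t ^ 2) / (1 + d * t ^ 2) ≤ c := by
  rw [div_le_iff₀ (by positivity)]
  linarith [quadratic_nonneg_of_sq_le hc hk hb t]

theorem div_eq_at_vertex (hd : 0 ≤ d) (hk : 0 < c * d + p) (hb : b ^ 2 = 4 * c * (c * d + p)) :
    (b * (b / (2 * (c * d + p))) - p * (b / (2 * (c * d + p))) ^ 2) /
      (1 + d * (b / (2 * (c * d + p))) ^ 2) = c := by
  rw [div_eq_iff (by positivity)]
  field_simp
  linear_combination (c * d + p) * hb

theorem tendsto_mul_sq_div_one_add_mul_sq (hd : 0 < d) :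
    Tendsto (fun t : ℝ => c * d * t ^ 2 / (1 + d * t ^ 2)) atTop (𝓝 c) := by
  have hden : Tendsto (fun t : ℝ => 1 + d * t ^ 2) atTop atTop :=
    tendsto_atTop_add_const_left _ 1 ((tendsto_pow_atTop two_ne_zero).const_mul_atTop hd)
  have hlim := (tendsto_const_nhds (x := c)).sub ((tendsto_const_nhds (x := c)).div_atTop hden)
  rw [sub_zero] at hlim
  refine hlim.congr' ?_
  filter_upwards with t
  have : 0 < 1 + d * t ^ 2 := by positivity
  field_simp
  ring

theorem isLUB_add_div_of_sq_eq (hd : 0 < d) (hb : 0 ≤ b) (hc : 0 ≤ c) (hk : 0 ≤ c * d + p)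
    (hdisc : b ^ 2 = 4 * c * (c * d + p)) :
    IsLUB {y | ∃ t ≥ (0 : ℝ), y = s + (b * t - p * t ^ 2) / (1 + d * t ^ 2)} (s + c) := by
  have hub : s + c ∈
      upperBounds {y | ∃ t ≥ (0 : ℝ), y = s + (b * t - p * t ^ 2) / (1 + d * t ^ 2)} := by
    rintro _ ⟨t, -, rfl⟩
    gcongr
    exact div_le_of_sq_le hd.le hc hk hdisc.le t
  rcases hk.eq_or_lt with hk0 | hkpos
  · have hb0 : b = 0 := by nlinarith
    have hp : p = -(c * d) := by linarith
    refine isLUB_of_mem_closure hub (mem_closure_of_tendsto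
      ((tendsto_mul_sq_div_one_add_mul_sq hd).const_add s) ?_)
    filter_upwards [eventually_ge_atTop 0] with t ht
    exact ⟨t, ht, by rw [hb0, hp]; ring⟩
  · refine IsGreatest.isLUB ⟨⟨b / (2 * (c * d + p)), by positivity, ?_⟩, hub⟩
    rw [div_eq_at_vertex hd.le hkpos hdisc]

theorem isLUB_add_div (hd : 0 < d) (hb : 0 ≤ b) :
    IsLUB {y | ∃ t ≥ (0 : ℝ), y = s + (b * t - p * t ^ 2) / (1 + d * t ^ 2)}
      (s + (Real.sqrt (p ^ 2 + d * b ^ 2) - p) / (2 * d)) := by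
  have hp : |p| ≤ Real.sqrt (p ^ 2 + d * b ^ 2) := Real.abs_le_sqrt (by nlinarith [sq_nonneg b])
  have hsq : Real.sqrt (p ^ 2 + d * b ^ 2) ^ 2 = p ^ 2 + d * b ^ 2 := Real.sq_sqrt (by positivity)
  generalize Real.sqrt (p ^ 2 + d * b ^ 2) = r at hp hsq ⊢
  have hk : (r - p) / (2 * d) * d + p = (r + p) / 2 := by
    field_simp
    ring
  refine isLUB_add_div_of_sq_eq hd hb (div_nonneg (by linarith [le_abs_self p]) (by positivity))
    (hk ▸ by linarith [neg_abs_le p]) ?_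
  rw [hk]
  field_simp
  linear_combination -4 * hsq

end RationalQuadratic

open RationalQuadratic in
theorem sup_weyl_estimate_nonharmonic_general (n : ℕ) (hn : 2 ≤ n) (μ ν₀ η S₀ : ℝ)
    (hμ : 0 < μ) (hν₀ : 0 ≤ ν₀) :
    sSup {y : ℝ | ∃ t ≥ (0 : ℝ),
        y = S₀ + (4 * ν₀ * t - 2 * (((n : ℝ) - 1) * μ ^ 2 * S₀ + 4 * η) * t ^ 2) /
              (1 + 2 * (n : ℝ) * ((n : ℝ) - 1) * μ ^ 2 * t ^ 2)} =
      (1 / (2 * (n : ℝ))) * ((2 * (n : ℝ) - 1) * S₀ - 4 * η / (((n : ℝ) - 1) * μ ^ 2) +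
        Real.sqrt ((S₀ + 4 * η / (((n : ℝ) - 1) * μ ^ 2)) ^ 2 +
          (8 * (n : ℝ) / ((n : ℝ) - 1)) * (ν₀ / μ) ^ 2)) := by
  have hn1 : (0 : ℝ) < n - 1 := by
    have : (2 : ℝ) ≤ n := by exact_mod_cast hn
    linarith
  set a := ((n : ℝ) - 1) * μ ^ 2
  have ha : 0 < a := by positivity
  rw [(isLUB_add_div (by positivity) (by positivity)).csSup_eq ⟨S₀, 0, le_rfl, by simp⟩]
  have hsqrt : Real.sqrt ((2 * (a * S₀ + 4 * η)) ^ 2 + 2 * n * (n - 1) * μ ^ 2 * (4 * ν₀) ^ 2) =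
      2 * a * Real.sqrt ((S₀ + 4 * η / a) ^ 2 + 8 * n / (n - 1) * (ν₀ / μ) ^ 2) := by
    rw [← Real.sqrt_sq (by positivity : 0 ≤ 2 * a), ← Real.sqrt_mul (sq_nonneg _)]
    congr 1
    simp only [a]
    field_simp
    ring
  rw [hsqrt]
  field_simp
  ring

theorem sup_weyl_estimate_nonharmonic (n : ℕ) (hn : 2 ≤ n) (μ ν₀ η S₀ : ℝ)
    (hμ : 0 < μ) (hν₀ : 0 ≤ ν₀) (hη : 0 ≤ η) :
    sSup {y : ℝ | ∃ t ≥ (0 : ℝ),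
        y = S₀ + (4 * ν₀ * t - 2 * (((n : ℝ) - 1) * μ ^ 2 * S₀ + 4 * η) * t ^ 2) /
              (1 + 2 * (n : ℝ) * ((n : ℝ) - 1) * μ ^ 2 * t ^ 2)} =
      (1 / (2 * (n : ℝ))) * ((2 * (n : ℝ) - 1) * S₀ - 4 * η / (((n : ℝ) - 1) * μ ^ 2) +
        Real.sqrt ((S₀ + 4 * η / (((n : ℝ) - 1) * μ ^ 2)) ^ 2 +
          (8 * (n : ℝ) / ((n : ℝ) - 1)) * (ν₀ / μ) ^ 2)) :=
  sup_weyl_estimate_nonharmonic_general n hn μ ν₀ η S₀ hμ hν₀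
end
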